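/- arXiv:1101.0548 — 6 statements merged into one kernel-verified Lean document; each statement's English description precedes it below -/
import Mathlib

section
/- The map A ↦ *A is a Boolean isomorphism from the power set P(X) onto a subfield of sets of P(*X): it is injective and commutes with binary unions, binary intersections, and complements. -/
open Classical in
/-- A functional extension of a set `X` (with distinguished elements `0, 1`):
a superset `S ⊇ X` (given by the injection `inc`) together with a distinguished
extension `star f : S → S` of each `f : X → X`, satisfying `(comp)` and `(diag)`. -/
structure FunExt (X : Type*) (S : Type*) where
  inc : X → S
  inc_inj : Function.Injective inc
  zero : X
  one : X
  one_ne_zero : one ≠ zero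
  star : (X → X) → S → S
  star_extends : ∀ (f : X → X) (x : X), star f (inc x) = inc (f x)
  comp : ∀ (f g : X → X) (ξ : S), star g (star f ξ) = star (g ∘ f) ξ
  diag : ∀ (f g : X → X) (ξ : S),
    star (fun x => if f x = g x then one else zero) ξ =
      if star f ξ = star g ξ then inc one else inc zero

namespace FunExt

variable {X S : Type*}

open Classical in
/-- The characteristic function `χ_A : X → X` of a subset `A ⊆ X`. -/
noncomputable def chi (E : FunExt X S) (A : Set X) : X → X :=
  fun x => if x ∈ A then E.one else E.zero

/-- The extension `*A ⊆ S` of a subset `A ⊆ X`, defined via `*χ_A`. -/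
def starSet (E : FunExt X S) (A : Set X) : Set S :=
  { ξ | E.star (E.chi A) ξ = E.inc E.one }

/-- A functional extension is irredundant if every point is in the range of some `*f`. -/
def Irredundant (E : FunExt X S) : Prop :=
  ∀ ξ : S, ∃ (f : X → X) (η : S), E.star f η = ξ

/-- A functional extension is directed `(dir)`. -/
def Directed (E : FunExt X S) : Prop :=
  ∀ ξ η : S, ∃ (f g : X → X) (ζ : S), E.star f ζ = ξ ∧ E.star g ζ = η

end FunExt

namespace FunExt

open Classical

variable {X S : Type*} (E : FunExt X S)

lemma inc_one_ne_inc_zero : E.inc E.one ≠ E.inc E.zero :=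
  fun h => E.one_ne_zero (E.inc_inj h)

lemma star_const_one (ξ : S) : E.star (fun _ => E.one) ξ = E.inc E.one := by
  have h := E.diag id id ξ
  simpa using h

lemma star_const_zero (ξ : S) : E.star (fun _ => E.zero) ξ = E.inc E.zero := by
  have hx : E.star (fun _ => E.zero) ξ ≠ E.inc E.one := by
    intro hc
    have h1 := E.comp (fun _ => E.zero) (fun x => if x = E.zero then E.one else E.zero) ξ
    rw [hc, E.star_extends] at h1
    have h2 : ((fun x => if x = E.zero then E.one else E.zero) ∘ (fun _ : X => E.zero))
        = (fun _ : X => E.one) := by funext x; simp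
    rw [h2, E.star_const_one] at h1
    rw [if_neg E.one_ne_zero] at h1
    exact E.inc_one_ne_inc_zero h1.symm
  have h := E.diag (fun _ => E.one) (fun _ => E.zero) ξ
  rw [E.star_const_one] at h
  have hcond : ¬ (E.inc E.one = E.star (fun _ : X => E.zero) ξ) := fun hh => hx hh.symm
  rw [if_neg hcond] at h
  simpa [E.one_ne_zero] using h

lemma chi_empty : E.chi (∅ : Set X) = fun _ => E.zero := by funext x; simp [chi]

lemma chi_univ : E.chi (Set.univ : Set X) = fun _ => E.one := by funext x; simp [chi]

lemma star_chi_cases (A : Set X) (ξ : S) :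
    E.star (E.chi A) ξ = E.inc E.one ∨ E.star (E.chi A) ξ = E.inc E.zero := by
  have hfg : (fun x => if E.chi A x = (fun _ : X => E.one) x then E.one else E.zero)
      = E.chi A := by
    funext x
    by_cases hx : x ∈ A <;> simp [chi, hx, E.one_ne_zero, Ne.symm E.one_ne_zero]
  have h := E.diag (E.chi A) (fun _ => E.one) ξ
  rw [hfg, E.star_const_one] at h
  by_cases hc : E.star (E.chi A) ξ = E.inc E.one
  · exact Or.inl hc
  · right; rwa [if_neg hc] at h

lemma mem_starSet (A : Set X) (ξ : S) :
    ξ ∈ E.starSet A ↔ E.star (E.chi A) ξ = E.inc E.one := Iff.rfl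

lemma inc_mem_starSet (A : Set X) (x : X) : E.inc x ∈ E.starSet A ↔ x ∈ A := by
  rw [E.mem_starSet, E.star_extends]
  constructor
  · intro h
    by_contra hx
    have hz : E.chi A x = E.zero := by simp [chi, hx]
    rw [hz] at h
    exact E.inc_one_ne_inc_zero h.symm
  · intro hx; simp [chi, hx]

lemma starSet_compl (A : Set X) : E.starSet Aᶜ = (E.starSet A)ᶜ := by
  ext ξ
  have hfg : (fun x => if E.chi A x = (fun _ : X => E.zero) x then E.one else E.zero)
      = E.chi Aᶜ := by
    funext x
    by_cases hx : x ∈ A <;> simp [chi, hx, E.one_ne_zero]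
  have h := E.diag (E.chi A) (fun _ => E.zero) ξ
  rw [hfg, E.star_const_zero] at h
  simp only [Set.mem_compl_iff]
  rw [E.mem_starSet Aᶜ ξ, h, E.mem_starSet A ξ]
  rcases E.star_chi_cases A ξ with h1 | h1 <;>
    simp [h1, E.inc_one_ne_inc_zero, Ne.symm E.inc_one_ne_inc_zero]

lemma mem_starSet_inter (A B : Set X) (ξ : S) :
    ξ ∈ E.starSet (A ∩ B) ↔ ξ ∈ E.starSet A ∧ ξ ∈ E.starSet B := by
  by_cases hw : ∃ w : X, w ≠ E.zero ∧ w ≠ E.one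
  · obtain ⟨w, hw0, hw1⟩ := hw
    have hi1w : E.inc E.one ≠ E.inc w := fun hh => hw1 (E.inc_inj hh).symm
    have hi0w : E.inc E.zero ≠ E.inc w := fun hh => hw0 (E.inc_inj hh).symm
    set g : X → X := fun x => if x = E.one then E.one else w with hgdef
    have hfg : (fun x => if E.chi B x = (g ∘ E.chi A) x then E.one else E.zero)
        = E.chi (A ∩ B) := by
      funext x
      by_cases hA : x ∈ A <;> by_cases hB : x ∈ B <;>
        simp [chi, hgdef, Function.comp, hA, hB, E.one_ne_zero, Ne.symm E.one_ne_zero,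
          hw0, hw1, Ne.symm hw0, Ne.symm hw1]
    have h := E.diag (E.chi B) (g ∘ E.chi A) ξ
    rw [hfg] at h
    have hcomp := E.comp (E.chi A) g ξ
    rcases E.star_chi_cases A ξ with hA | hA
    · rw [hA, E.star_extends] at hcomp
      have hg1 : g E.one = E.one := by simp [hgdef]
      rw [hg1] at hcomp
      rw [← hcomp] at h
      rcases E.star_chi_cases B ξ with hB | hB <;>
        simp [mem_starSet, h, hA, hB, E.inc_one_ne_inc_zero, Ne.symm E.inc_one_ne_inc_zero]
    · rw [hA, E.star_extends] at hcomp
      have hg0 : g E.zero = w := by simp [hgdef, Ne.symm E.one_ne_zero]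
      rw [hg0] at hcomp
      rw [← hcomp] at h
      rcases E.star_chi_cases B ξ with hB | hB <;>
        simp [mem_starSet, h, hA, hB, E.inc_one_ne_inc_zero, Ne.symm E.inc_one_ne_inc_zero,
          hi1w, hi0w]
  · push_neg at hw
    have htwo : ∀ x : X, x = E.zero ∨ x = E.one := by
      intro x
      by_cases h0 : x = E.zero
      · exact Or.inl h0
      · exact Or.inr (hw x h0)
    have hempty : ∀ ζ : S, ζ ∉ E.starSet (∅ : Set X) := by
      intro ζ hz
      rw [E.mem_starSet, E.chi_empty, E.star_const_zero] at hz
      exact E.inc_one_ne_inc_zero hz.symm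
    have huniv : ∀ ζ : S, ζ ∈ E.starSet (Set.univ : Set X) := by
      intro ζ; rw [E.mem_starSet, E.chi_univ, E.star_const_one]
    have hzo : ({E.zero} : Set X) = ({E.one} : Set X)ᶜ := by
      ext x
      rcases htwo x with rfl | rfl <;> simp [E.one_ne_zero, Ne.symm E.one_ne_zero]
    have hz1 : ∀ ζ : S, ζ ∈ E.starSet {E.zero} ↔ ζ ∉ E.starSet {E.one} := by
      intro ζ; rw [hzo, E.starSet_compl]; rfl
    have hone0 : ({E.zero} : Set X) ∩ {E.one} = ∅ := by
      ext x
      simp only [Set.mem_inter_iff, Set.mem_singleton_iff, Set.mem_empty_iff_false,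
        iff_false, not_and]
      rintro rfl hh
      exact E.one_ne_zero hh.symm
    have hone0' : ({E.one} : Set X) ∩ {E.zero} = ∅ := by
      rw [Set.inter_comm]; exact hone0
    have classify : ∀ C : Set X, C = ∅ ∨ C = {E.zero} ∨ C = {E.one} ∨ C = Set.univ := by
      intro C
      by_cases h0 : E.zero ∈ C <;> by_cases h1 : E.one ∈ C
      · exact Or.inr (Or.inr (Or.inr (by
          ext x; rcases htwo x with rfl | rfl <;> simp [h0, h1])))
      · exact Or.inr (Or.inl (by
          ext x; rcases htwo x with rfl | rfl <;>
            simp [h0, h1, E.one_ne_zero, Ne.symm E.one_ne_zero]))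
      · exact Or.inr (Or.inr (Or.inl (by
          ext x; rcases htwo x with rfl | rfl <;>
            simp [h0, h1, E.one_ne_zero, Ne.symm E.one_ne_zero])))
      · exact Or.inl (by ext x; rcases htwo x with rfl | rfl <;> simp [h0, h1])
    have he := hempty ξ
    have hu := huniv ξ
    have hz := hz1 ξ
    rcases classify A with rfl | rfl | rfl | rfl <;> rcases classify B with rfl | rfl | rfl | rfl <;>
      simp only [Set.empty_inter, Set.inter_empty, Set.univ_inter, Set.inter_univ,
        Set.inter_self, hone0, hone0'] <;> tauto

lemma starSet_inter (A B : Set X) : E.starSet (A ∩ B) = E.starSet A ∩ E.starSet B := by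
  ext ξ; exact E.mem_starSet_inter A B ξ

end FunExt

/-- `A ↦ *A` is a Boolean isomorphism of `𝒫(X)` onto a field of
subsets of `*X`: it is injective and commutes with binary unions, binary
intersections and complements. -/

theorem stmt_5 {X S : Type*} (E : FunExt X S) :
    Function.Injective (E.starSet) ∧
    (∀ A B : Set X, E.starSet (A ∪ B) = E.starSet A ∪ E.starSet B) ∧
    (∀ A B : Set X, E.starSet (A ∩ B) = E.starSet A ∩ E.starSet B) ∧
    (∀ A : Set X, E.starSet Aᶜ = (E.starSet A)ᶜ) := by
  refine ⟨?_, ?_, fun A B => E.starSet_inter A B, fun A => E.starSet_compl A⟩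
  · intro A B hAB
    ext x
    rw [← E.inc_mem_starSet A x, ← E.inc_mem_starSet B x, hAB]
  · intro A B
    have hAB : A ∪ B = (Aᶜ ∩ Bᶜ)ᶜ := by
      rw [Set.compl_inter, compl_compl, compl_compl]
    rw [hAB, E.starSet_compl, E.starSet_inter, E.starSet_compl, E.starSet_compl,
      Set.compl_inter, compl_compl, compl_compl]
end

section
/- For all f, g : X → X and ξ ∈ *X: *f(ξ) = *g(ξ) if and only if there exists A ⊆ X such that ξ ∈ *A and f(x) = g(x) for all x ∈ A. -/
/-- `*f(ξ) = *g(ξ)` iff `ξ ∈ *A` for some `A ⊆ X` on which `f = g`. -/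
theorem stmt_7 {X S : Type*} (E : FunExt X S) (f g : X → X) (ξ : S) :
    E.star f ξ = E.star g ξ ↔
      ∃ A : Set X, ξ ∈ E.starSet A ∧ ∀ x ∈ A, f x = g x := by
  classical
  -- star of a constant function is constant
  have hconst1 : E.star (fun _ => E.one) ξ = E.inc E.one := by
    have h := E.diag (fun _ => E.one) (fun _ => E.one) ξ
    simpa using h
  have hconst : ∀ c : X, E.star (fun _ => c) ξ = E.inc c := by
    intro c
    have h := E.comp (fun _ => E.one) (fun _ => c) ξ
    rw [hconst1, E.star_extends] at h
    exact h.symm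
  constructor
  · intro hfg
    refine ⟨{x | f x = g x}, ?_, fun x hx => hx⟩
    have h := E.diag f g ξ
    have hchi : E.chi {x | f x = g x} = fun x => if f x = g x then E.one else E.zero := by
      funext x; simp [FunExt.chi, Set.mem_setOf_eq]
    simp only [FunExt.starSet, Set.mem_setOf_eq, hchi, h, if_pos hfg]
  · rintro ⟨A, hξA, hA⟩
    simp only [FunExt.starSet, Set.mem_setOf_eq] at hξA
    by_cases hAe : A.Nonempty
    · obtain ⟨a₀, ha₀⟩ := hAe
      set w : X → X := fun x => if x ∈ A then x else a₀ with hw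
      have hwx : ∀ x, (w x = x) ↔ x ∈ A := by
        intro x
        constructor
        · intro h
          by_contra hx
          have : w x = a₀ := by simp [hw, hx]
          rw [h] at this
          exact hx (this ▸ ha₀)
        · intro hx; simp [hw, hx]
      have hdiag := E.diag w id ξ
      have hchi : (fun x => if w x = id x then E.one else E.zero) = E.chi A := by
        funext x
        simp only [FunExt.chi, id]
        exact if_congr (hwx x) rfl rfl
      rw [hchi, hξA] at hdiag
      have hwid : E.star w ξ = E.star id ξ := by
        by_contra hne
        rw [if_neg hne] at hdiag
        exact E.one_ne_zero (E.inc_inj hdiag)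
      have hfw : f ∘ w = g ∘ w := by
        funext x
        simp only [Function.comp]
        have : w x ∈ A := by by_cases hx : x ∈ A <;> simp [hw, hx, ha₀]
        exact hA _ this
      calc E.star f ξ = E.star (f ∘ id) ξ := rfl
        _ = E.star f (E.star id ξ) := (E.comp id f ξ).symm
        _ = E.star f (E.star w ξ) := by rw [hwid]
        _ = E.star (f ∘ w) ξ := E.comp w f ξ
        _ = E.star (g ∘ w) ξ := by rw [hfw]
        _ = E.star g (E.star w ξ) := (E.comp w g ξ).symm
        _ = E.star g (E.star id ξ) := by rw [hwid]
        _ = E.star (g ∘ id) ξ := E.comp id g ξ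
        _ = E.star g ξ := rfl
    · exfalso
      have hAempty : A = ∅ := Set.not_nonempty_iff_eq_empty.mp hAe
      have : E.chi A = fun _ => E.zero := by
        funext x; simp [FunExt.chi, hAempty]
      rw [this, hconst E.zero] at hξA
      exact E.one_ne_zero (E.inc_inj hξA.symm)
end

section
/- If p₁, p₂ : X → X are unary projections, i.e. for all x,y ∈ X there is a unique z ∈ X with p₁(z)=x and p₂(z)=y, then in a directed functional extension *X, for all ξ, η ∈ *X there exists ζ ∈ *X with *p₁(ζ)=ξ and *p₂(ζ)=η. -/
/-- if `p₁, p₂` are unary projections, then in a directed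
functional extension every pair `ξ, η` is of the form `*p₁(ζ), *p₂(ζ)`. -/
theorem stmt_13 {X S : Type*} (E : FunExt X S) (hdir : E.Directed)
    (p₁ p₂ : X → X) (hp : ∀ x y : X, ∃! z : X, p₁ z = x ∧ p₂ z = y)
    (ξ η : S) :
    ∃ ζ : S, E.star p₁ ζ = ξ ∧ E.star p₂ ζ = η := by
  obtain ⟨f, g, ζ₀, hf, hg⟩ := hdir ξ η
  choose h hh _ using fun x => hp (f x) (g x)
  have h1 : p₁ ∘ h = f := funext fun x => (hh x).1
  have h2 : p₂ ∘ h = g := funext fun x => (hh x).2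
  refine ⟨E.star h ζ₀, ?_, ?_⟩
  · rw [E.comp, h1, hf]
  · rw [E.comp, h2, hg]
end

section
/- In a directed functional extension *X, the family { α̌ : α ∈ *X }, where α̌ = { ξ ∈ *X : ∃ f : X → X, *f(ξ) = α }, has the finite intersection property. -/
/-- in a directed functional extension, the family of the sets
`α̌ = { ξ : ∃ f, *f(ξ) = α }` has the finite intersection property. -/
theorem stmt_15 {X S : Type*} (E : FunExt X S) (hdir : E.Directed)
    (T : Finset S) :
    (⋂ α ∈ T, { ξ : S | ∃ f : X → X, E.star f ξ = α }).Nonempty := by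
  classical
  induction T using Finset.induction_on with
  | empty => exact ⟨E.inc E.one, by simp⟩
  | @insert α T hα ih =>
    obtain ⟨ξ₀, hξ₀⟩ := ih
    obtain ⟨f, g, ζ, hf, hg⟩ := hdir α ξ₀
    refine ⟨ζ, ?_⟩
    simp only [Set.mem_iInter, Finset.mem_insert] at hξ₀ ⊢
    rintro β (rfl | hβ)
    · exact ⟨f, hf⟩
    · obtain ⟨h, hh⟩ := hξ₀ β hβ
      exact ⟨h ∘ g, by rw [← E.comp, hg, hh]⟩
end

section
/- In a directed functional extension *X, the extension of an n-ary function is well-defined: if φ : Xⁿ → X, f₁,…,fₙ, g₁,…,gₙ : X → X, and ξ ∈ *X satisfy *fᵢ(ξ) = *gᵢ(ξ) for i = 1,…,n, then *(φ ∘ (f₁,…,fₙ))(ξ) = *(φ ∘ (g₁,…,gₙ))(ξ). -/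
theorem FunExt.star_const' {X S : Type*} (E : FunExt X S) (hdir : E.Directed)
    (c : X) (ξ : S) : E.star (fun _ => c) ξ = E.inc c := by
  obtain ⟨p, q, ζ, hp, hq⟩ := hdir ξ (E.inc E.zero)
  have h1 : E.star (fun _ => c) ξ = E.star (fun _ => c) ζ := by
    rw [← hp, E.comp]; rfl
  have h2 : E.inc c = E.star (fun _ => c) ζ := by
    have h := E.star_extends (fun _ => c) E.zero
    rw [← h, ← hq, E.comp]; rfl
  rw [h1, ← h2]

theorem FunExt.star_id' {X S : Type*} (E : FunExt X S) (hdir : E.Directed)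
    (ξ : S) : E.star id ξ = ξ := by
  obtain ⟨p, q, ζ, hp, _⟩ := hdir ξ ξ
  rw [← hp, E.comp, Function.id_comp]

open Classical in
theorem FunExt.key {X S : Type*} (E : FunExt X S) (hdir : E.Directed)
    (f g F G : X → X) (ξ : S)
    (hfg : E.star f ξ = E.star g ξ) (hFG : ∀ x, f x = g x → F x = G x) :
    E.star F ξ = E.star G ξ := by
  have hA : E.star (fun x => if f x = g x then E.one else E.zero) ξ = E.inc E.one := by
    rw [E.diag, if_pos hfg]
  by_cases hex : ∃ a, f a = g a
  · obtain ⟨a, ha⟩ := hex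
    set r : X → X := fun x => if f x = g x then x else a with hr_def
    have hchi : (fun x => if r x = id x then E.one else E.zero)
        = (fun x => if f x = g x then E.one else E.zero) := by
      funext x
      by_cases h : f x = g x
      · simp [hr_def, h]
      · simp only [hr_def, if_neg h, id_eq]
        rw [if_neg]
        intro hxa
        exact h (hxa ▸ ha)
    have hdiag := E.diag r id ξ
    rw [hchi, hA] at hdiag
    have hr : E.star r ξ = ξ := by
      by_cases h : E.star r ξ = E.star id ξ
      · rw [h, E.star_id' hdir]
      · rw [if_neg h] at hdiag
        exact absurd (E.inc_inj hdiag) E.one_ne_zero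
    calc E.star F ξ = E.star F (E.star r ξ) := by rw [hr]
      _ = E.star (F ∘ r) ξ := E.comp r F ξ
      _ = E.star (G ∘ r) ξ := by
          congr 1
          funext x
          simp only [Function.comp_apply, hr_def]
          by_cases h : f x = g x
          · rw [if_pos h]; exact hFG x h
          · rw [if_neg h]; exact hFG a ha
      _ = E.star G (E.star r ξ) := (E.comp r G ξ).symm
      _ = E.star G ξ := by rw [hr]
  · have hz : (fun x => if f x = g x then E.one else E.zero) = fun _ => E.zero := by
      funext x; exact if_neg (fun h => hex ⟨x, h⟩)
    rw [hz, E.star_const' hdir] at hA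
    exact absurd (E.inc_inj hA) (Ne.symm E.one_ne_zero)

/-- in a directed functional extension, the parametric extension
of an `n`-ary function is well defined: if `*fᵢ(ξ) = *gᵢ(ξ)` for all `i`, then
`*(φ∘(f₁,…,fₙ))(ξ) = *(φ∘(g₁,…,gₙ))(ξ)`. -/
theorem stmt_17 {X S : Type*} (E : FunExt X S) (hdir : E.Directed)
    (n : ℕ) (φ : (Fin n → X) → X) (f g : Fin n → (X → X)) (ξ : S)
    (hfg : ∀ i : Fin n, E.star (f i) ξ = E.star (g i) ξ) :
    E.star (fun x => φ (fun i => f i x)) ξ =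
      E.star (fun x => φ (fun i => g i x)) ξ := by
  classical
  have main : ∀ k : ℕ, k ≤ n →
      E.star (fun x => φ (fun i => f i x)) ξ
        = E.star (fun x => φ (fun i => (if (i : ℕ) < k then g i else f i) x)) ξ := by
    intro k
    induction k with
    | zero => intro _; simp
    | succ k ih =>
      intro hk
      rw [ih (Nat.le_of_succ_le hk)]
      have hkn : k < n := hk
      refine E.key hdir (f ⟨k, hkn⟩) (g ⟨k, hkn⟩) _ _ ξ (hfg ⟨k, hkn⟩) ?_
      intro x hx
      congr 1
      funext i
      by_cases h1 : (i : ℕ) < k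
      · rw [if_pos h1, if_pos (Nat.lt_succ_of_lt h1)]
      · by_cases h2 : (i : ℕ) = k
        · rw [if_neg h1, if_pos (by omega)]
          have hi : i = ⟨k, hkn⟩ := Fin.ext h2
          rw [hi]; exact hx
        · rw [if_neg h1, if_neg (by omega)]
  have h := main n le_rfl
  rw [h]
  congr 1
  funext x
  congr 1
  funext i
  rw [if_pos i.isLt]
end

section
/- Let *X be a directed functional extension of X. Fix for each α ∈ *X and each ξ ∈ α̌ := { ξ : ∃f, *f(ξ)=α } a function f_{ξα} : X → X with *f_{ξα}(ξ) = α, and define α̂ : *X × X → X by α̂(ξ,x) = f_{ξα}(x) if ξ ∈ α̌ and α̂(ξ,x) = x otherwise. Let V be any ultrafilter on *X extending { α̌ : α ∈ *X }, let U_ξ = { A ⊆ X : ξ ∈ *A }, and let D = Σ_V U_ξ be the sum ultrafilter on I = *X × X, i.e. D ∈ D iff { ξ : { x : (ξ,x) ∈ D } ∈ U_ξ } ∈ V. Then for all α, β ∈ *X and g : X → X: β = *g(α) if and only if β̂ = g ∘ α̂ modulo D. -/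
open Classical in
/-- with `α̌ = {ξ : ∃f, *f(ξ)=α}`, chosen functions `f_{ξα}` with
`*f_{ξα}(ξ)=α`, the induced maps `α̂ : *X × X → X`, an ultrafilter `V` on `*X`
extending the family `{α̌}`, and the sum ultrafilter `D = Σ_V U_ξ` on `*X × X`
(where `U_ξ = {A : ξ ∈ *A}`): for all `α, β ∈ *X` and `g : X → X`,
`β = *g(α)` iff `β̂ = g ∘ α̂` modulo `D`. -/
theorem stmt_19 {X S : Type*} (E : FunExt X S) (hdir : E.Directed)
    (fsel : S → S → (X → X))
    (hfsel : ∀ α ξ : S, (∃ f : X → X, E.star f ξ = α) → E.star (fsel α ξ) ξ = α)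
    (hat : S → (S × X) → X)
    (hhat : ∀ (α ξ : S) (x : X),
      hat α (ξ, x) = if ∃ f : X → X, E.star f ξ = α then fsel α ξ x else x)
    (V : Ultrafilter S)
    (hV : ∀ α : S, { ξ : S | ∃ f : X → X, E.star f ξ = α } ∈ V)
    (α β : S) (g : X → X) :
    β = E.star g α ↔
      { ξ : S | ξ ∈ E.starSet { x : X | hat β (ξ, x) = g (hat α (ξ, x)) } } ∈ V := by
  have key : ∀ ξ : S, (∃ f : X → X, E.star f ξ = α) → (∃ f : X → X, E.star f ξ = β) →
      (ξ ∈ E.starSet { x : X | hat β (ξ, x) = g (hat α (ξ, x)) } ↔ β = E.star g α) := by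
    intro ξ hα hβ
    have hα' := hfsel α ξ hα
    have hβ' := hfsel β ξ hβ
    have hchi : E.chi { x : X | hat β (ξ, x) = g (hat α (ξ, x)) } =
        fun x => if fsel β ξ x = (g ∘ fsel α ξ) x then E.one else E.zero := by
      funext x
      simp only [FunExt.chi, Set.mem_setOf_eq, hhat, if_pos hα, if_pos hβ,
        Function.comp_apply]
    unfold FunExt.starSet
    rw [Set.mem_setOf_eq, hchi, E.diag, ← E.comp, hα', hβ']
    constructor
    · intro h
      by_contra hne
      rw [if_neg hne] at h
      exact E.one_ne_zero (E.inc_inj h.symm)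
    · intro h
      rw [if_pos h]
  constructor
  · intro h
    refine Filter.mem_of_superset (Filter.inter_mem (hV α) (hV β)) ?_
    rintro ξ ⟨hα, hβ⟩
    exact (key ξ hα hβ).2 h
  · intro h
    obtain ⟨ξ, hmem, hα, hβ⟩ :=
      Filter.nonempty_of_mem (Filter.inter_mem h (Filter.inter_mem (hV α) (hV β)))
    exact (key ξ hα hβ).1 hmem
end
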